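/- arXiv:1104.4674 — 4 statements merged into one kernel-verified Lean document; each statement's English description precedes it below -/
import Mathlib

section
/- Let e_i ∈ ℝ^([Δ]²) be an elementary unit vector at pixel i, and let S be a set of grid cells that is closed under taking ancestors and that, for every level j, contains all cells at level j within ℓ₁ distance (2/ε)·2^j of the nearest k-median center, where the nearest center to pixel i is at distance v_i. If h is the highest level at which the cell containing i is not in S, then v_i ≥ (2/ε)·2^h and consequently ‖(P e_i)_{S̄}‖₁ = Σ_{j=0}^{h} 2^j < 2^{h+1} ≤ ε·v_i. -/
open scoped Classical BigOperators

/-- Pixels of a `2^l × 2^l` image. -/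
abbrev Pix (l : ℕ) := Fin (2^l) × Fin (2^l)

/-- Grid cells of the pyramid: a cell at level `i` has side `2^i`, and there
are `2^(l-i) × 2^(l-i)` of them. -/
abbrev Cell (l : ℕ) := Σ i : Fin (l+1), Fin (2^(l-(i:ℕ))) × Fin (2^(l-(i:ℕ)))

/-- Pixel `p` lies in cell `c`. -/
def inCell {l : ℕ} (p : Pix l) (c : Cell l) : Prop :=
  (p.1 : ℕ) / 2^(c.1 : ℕ) = (c.2.1 : ℕ) ∧ (p.2 : ℕ) / 2^(c.1 : ℕ) = (c.2.2 : ℕ)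

/-- The pyramid transform: the coordinate for a level-`i` cell `c` equals
`2^i` times the sum of `x` over the pixels of `c`. -/
noncomputable def pyr {l : ℕ} (x : Pix l → ℝ) (c : Cell l) : ℝ :=
  2^(c.1:ℕ) * ∑ p ∈ Finset.univ.filter (fun p : Pix l => inCell p c), x p

/-- `c'` is an ancestor of `c` (possibly `c` itself). -/
def isAncestor {l : ℕ} (c' c : Cell l) : Prop :=
  (c.1 : ℕ) ≤ (c'.1 : ℕ) ∧
  (c.2.1 : ℕ) / 2^((c'.1:ℕ) - (c.1:ℕ)) = (c'.2.1 : ℕ) ∧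
  (c.2.2 : ℕ) / 2^((c'.1:ℕ) - (c.1:ℕ)) = (c'.2.2 : ℕ)

/-- `S` is closed under taking ancestors, i.e. a rooted subtree of the 4-ary
cell hierarchy. -/
def AncClosed {l : ℕ} (S : Finset (Cell l)) : Prop :=
  ∀ c ∈ S, ∀ c' : Cell l, isAncestor c' c → c' ∈ S

/-- `c` is a child of `q` in the cell hierarchy. -/
def isChild {l : ℕ} (c q : Cell l) : Prop :=
  (q.1 : ℕ) = (c.1 : ℕ) + 1 ∧ (c.2.1 : ℕ) / 2 = (q.2.1 : ℕ) ∧ (c.2.2 : ℕ) / 2 = (q.2.2 : ℕ)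

/-- ℓ₁ norm of a vector indexed by a finite type. -/
noncomputable def l1 {ι : Type*} [Fintype ι] (v : ι → ℝ) : ℝ := ∑ i, |v i|

/-- Restriction of a vector to a set of coordinates. -/
noncomputable def restr {ι : Type*} (S : Finset ι) (v : ι → ℝ) : ι → ℝ :=
  fun i => if i ∈ S then v i else 0

/-- Number of nonzero coordinates. -/
noncomputable def sparsity {ι : Type*} [Fintype ι] (x : ι → ℝ) : ℕ :=
  (Finset.univ.filter fun i => x i ≠ 0).card

/-- ℓ₁ ground distance between pixels. -/
noncomputable def dist1 {l : ℕ} (p q : Pix l) : ℝ :=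
  |(p.1 : ℝ) - (q.1 : ℝ)| + |(p.2 : ℝ) - (q.2 : ℝ)|

/-- Min-cost flow distance between two nonnegative vectors of equal mass. -/
noncomputable def EMDstar {l : ℕ} (x y : Pix l → ℝ) : ℝ :=
  sInf {c | ∃ γ : Pix l → Pix l → ℝ, (∀ i j, 0 ≤ γ i j) ∧
    (∀ i, ∑ j, γ i j = x i) ∧ (∀ j, ∑ i, γ i j = y j) ∧
    c = ∑ i, ∑ j, γ i j * dist1 i j}

/-- The Earth-Mover norm of a general vector: min cost flow from positive to
negative part, with penalty `2Δ` per unit of unmatched mass. -/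
noncomputable def emdNorm {l : ℕ} (w : Pix l → ℝ) : ℝ :=
  sInf {c | ∃ x y z : Pix l → ℝ, (∀ i, 0 ≤ x i) ∧ (∀ i, 0 ≤ y i) ∧
    (∀ i, x i - y i + z i = w i) ∧ (∑ i, x i = ∑ i, y i) ∧
    c = EMDstar x y + (2 * 2^l) * l1 z}

/-- The cell at level `j` containing pixel `p`. -/
def cellOf {l : ℕ} (j : Fin (l+1)) (p : Pix l) : Cell l :=
  ⟨j, (⟨(p.1 : ℕ) / 2^(j:ℕ), by
        have hj : (j:ℕ) ≤ l := Nat.lt_succ_iff.mp j.2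
        have h : (p.1 : ℕ) < 2^(j:ℕ) * 2^(l-(j:ℕ)) := by
          rw [← pow_add, Nat.add_sub_cancel' hj]; exact p.1.2
        exact Nat.div_lt_of_lt_mul h⟩,
      ⟨(p.2 : ℕ) / 2^(j:ℕ), by
        have hj : (j:ℕ) ≤ l := Nat.lt_succ_iff.mp j.2
        have h : (p.2 : ℕ) < 2^(j:ℕ) * 2^(l-(j:ℕ)) := by
          rw [← pow_add, Nat.add_sub_cancel' hj]; exact p.2.2
        exact Nat.div_lt_of_lt_mul h⟩)⟩




lemma inCell_cellOf {l : ℕ} (j : Fin (l+1)) (p : Pix l) : inCell p (cellOf j p) :=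
  ⟨rfl, rfl⟩

lemma eq_cellOf_of_inCell {l : ℕ} {p : Pix l} {c : Cell l} (hc : inCell p c) :
    c = cellOf c.1 p := by
  obtain ⟨j, a, b⟩ := c
  obtain ⟨h1, h2⟩ := hc
  simp only [cellOf]
  congr 1
  exact Prod.ext (Fin.ext h1.symm) (Fin.ext h2.symm)

lemma ancestor_cellOf {l : ℕ} (p : Pix l) (j k : Fin (l+1)) (hjk : (j:ℕ) ≤ (k:ℕ)) :
    isAncestor (cellOf k p) (cellOf j p) := by
  refine ⟨hjk, ?_, ?_⟩
  · show (p.1:ℕ) / 2^(j:ℕ) / 2^((k:ℕ) - (j:ℕ)) = (p.1:ℕ) / 2^(k:ℕ)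
    rw [Nat.div_div_eq_div_mul, ← pow_add, Nat.add_sub_cancel' hjk]
  · show (p.2:ℕ) / 2^(j:ℕ) / 2^((k:ℕ) - (j:ℕ)) = (p.2:ℕ) / 2^(k:ℕ)
    rw [Nat.div_div_eq_div_mul, ← pow_add, Nat.add_sub_cancel' hjk]

/-- The per-pixel estimate in the proof of model alignment: if `S` is closed
under ancestors and contains, at every level `j`, every cell within ℓ₁
distance `(2/ε)·2^j` of some center, and `h` is the highest level at which the
cell containing pixel `i` is missing from `S`, then the distance `v` from `i`
to the nearest center satisfies `v ≥ (2/ε)·2^h`, and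
`‖(P e_i)_{S̄}‖₁ = Σ_{j=0}^{h} 2^j < 2^{h+1} ≤ ε·v`. -/
theorem stmt2 {l : ℕ} (ε : ℝ) (hε : 0 < ε)
    (Ctr : Finset (Pix l)) (hCtr : Ctr.Nonempty)
    (S : Finset (Cell l)) (hanc : AncClosed S)
    (hS : ∀ (j : Fin (l+1)) (c : Cell l), c.1 = j →
      (∃ ct ∈ Ctr, ∃ p : Pix l, inCell p c ∧ dist1 p ct ≤ (2/ε) * 2^(j:ℕ)) → c ∈ S)
    (i : Pix l) (v : ℝ)
    (hv : IsLeast {d | ∃ ct ∈ Ctr, d = dist1 i ct} v)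
    (h : Fin (l+1))
    (hmiss : cellOf h i ∉ S)
    (hhigh : ∀ j : Fin (l+1), (h : ℕ) < (j : ℕ) → cellOf j i ∈ S)
    (e : Pix l → ℝ) (he : e = fun p => if p = i then 1 else 0) :
    (2/ε) * 2^(h:ℕ) ≤ v ∧
    ∑ c ∈ Finset.univ.filter (fun c : Cell l => c ∉ S), |pyr e c|
      = ∑ j ∈ Finset.range ((h:ℕ)+1), (2:ℝ)^j ∧
    ∑ j ∈ Finset.range ((h:ℕ)+1), (2:ℝ)^j < 2^((h:ℕ)+1) ∧
    (2:ℝ)^((h:ℕ)+1) ≤ ε * v := by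
  
  -- pyr e c computation
  have hpyr : ∀ c : Cell l, |pyr e c| = if inCell i c then (2:ℝ)^(c.1:ℕ) else 0 := by
    intro c
    have : ∑ p ∈ Finset.univ.filter (fun p : Pix l => inCell p c), e p
        = if inCell i c then (1:ℝ) else 0 := by
      rw [he]
      rw [Finset.sum_ite_eq' (Finset.univ.filter (fun p : Pix l => inCell p c)) i (fun _ => (1:ℝ))]
      simp
    rw [pyr, this]
    split <;> simp [abs_of_nonneg, pow_nonneg, le_of_lt]
  -- the missing cells containing i are exactly levels ≤ h
  have hnotS : ∀ j : Fin (l+1), (j:ℕ) ≤ (h:ℕ) → cellOf j i ∉ S := by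
    intro j hj hmem
    exact hmiss (hanc _ hmem _ (ancestor_cellOf i j h hj))
  -- Part 1
  have part1 : (2/ε) * 2^(h:ℕ) ≤ v := by
    obtain ⟨⟨ct, hct, hvd⟩, hlb⟩ := hv
    by_contra hlt
    push_neg at hlt
    apply hmiss
    refine hS h (cellOf h i) rfl ⟨ct, hct, i, inCell_cellOf h i, ?_⟩
    rw [← hvd]; exact le_of_lt hlt
  -- Part 2: the sum
  have part2 : ∑ c ∈ Finset.univ.filter (fun c : Cell l => c ∉ S), |pyr e c|
      = ∑ j ∈ Finset.range ((h:ℕ)+1), (2:ℝ)^j := by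
    rw [Finset.sum_congr rfl (fun c _ => hpyr c), Finset.sum_ite, Finset.sum_const_zero,
      add_zero, Finset.filter_filter]
    refine Finset.sum_bij' (fun c _ => ((c.1 : ℕ))) (fun j hj => cellOf ⟨j, by
        have := Finset.mem_range.mp hj
        omega⟩ i) ?_ ?_ ?_ ?_ ?_
    · intro c hc
      simp only [Finset.mem_filter, Finset.mem_univ, true_and] at hc
      rw [Finset.mem_range]
      by_contra hgt
      push_neg at hgt
      exact hc.1 ((eq_cellOf_of_inCell hc.2) ▸ hhigh c.1 (by omega))
    · intro j hj
      simp only [Finset.mem_filter, Finset.mem_univ, true_and]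
      have := Finset.mem_range.mp hj
      exact ⟨hnotS _ (by simpa using Nat.lt_succ_iff.mp this), inCell_cellOf _ i⟩
    · intro c hc
      simp only [Finset.mem_filter, Finset.mem_univ, true_and] at hc
      exact (eq_cellOf_of_inCell hc.2).symm
    · intro j hj; rfl
    · intro c hc; rfl
  have part3 : ∑ j ∈ Finset.range ((h:ℕ)+1), (2:ℝ)^j < 2^((h:ℕ)+1) := by
    have := geom_sum_eq (by norm_num : (2:ℝ) ≠ 1) ((h:ℕ)+1)
    rw [this]
    have : (0:ℝ) < 2^((h:ℕ)+1) := by positivity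
    norm_num
  have part4 : (2:ℝ)^((h:ℕ)+1) ≤ ε * v := by
    have h2 : ε * ((2/ε) * 2^(h:ℕ)) = 2^((h:ℕ)+1) := by
      field_simp; ring
    calc (2:ℝ)^((h:ℕ)+1) = ε * ((2/ε) * 2^(h:ℕ)) := h2.symm
      _ ≤ ε * v := by nlinarith
  exact ⟨part1, part2, part3, part4⟩
end

section
/- Let b ∈ ℝ₊^G be an assignment of values to the nodes of the pyramid (G the set of grid cells over all levels), and for each cell q at level i define the mass p_q = b_q / 2^i and the surplus s_q = p_q − Σ_{r ∈ C(q)} p_r, where C(q) are the children of q. Suppose s_q ≥ 0 for all q. Let y = Σ_{q ∈ G} s_q · e_q, where e_q is an elementary unit vector supported at an arbitrary pixel inside cell q. Then y minimizes ‖b − Py'‖₁ over all y' ∈ ℝ^n; moreover the minimum value equals (2 − 2^{−log Δ})·b_r − ‖b‖₁ where r is the root cell. -/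
open scoped Classical BigOperators

/-- The surplus of cell `q` given pyramid values `b`: the mass `b_q/2^i`
attributed to `q` minus the mass attributed to its children. -/
noncomputable def surplus {l : ℕ} (b : Cell l → ℝ) (q : Cell l) : ℝ :=
  b q / 2^(q.1:ℕ) - ∑ c ∈ Finset.univ.filter (fun c : Cell l => isChild c q), b c / 2^(c.1:ℕ)

/-- The root cell of the pyramid. -/
def rootCell (l : ℕ) : Cell l :=
  ⟨⟨l, Nat.lt_succ_self l⟩, (⟨0, Nat.pow_pos (by norm_num)⟩,
    ⟨0, Nat.pow_pos (by norm_num)⟩)⟩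

/-!
Telescoping the surpluses over the subtree of a cell `q` shows that `y` puts mass at least
`b_q / 2^i` into `q`, and mass `b_r / 2^l` in total. So `Py ≥ b` coordinatewise and
`‖b - Py‖₁ = Σ_i (2^i b_r / 2^l - Σ_{level i} b)`, whatever the picked pixels.

For any `y'` of total mass `S`, the level-`i` sum of `Py'` is `2^i S`, so the level-`i` part of
`‖b - Py'‖₁` is at least `|Σ_{level i} b - 2^i S|`. If `S ≥ b_r / 2^l` each of these terms is at
least the corresponding term above. If `S = b_r / 2^l - δ`, the lower levels gain at most
`Σ_{i<l} 2^i δ < 2^l δ`, while the root level, where `Σ_{level l} b = b_r`, costs exactly `2^l δ`.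
-/

open Finset

lemma sum_le_sum_abs_add_mul {ι : Type*} [DecidableEq ι] {s : Finset ι} {r : ι} (hr : r ∈ s)
    {w d : ι → ℝ} (hw : ∀ i ∈ s, 0 ≤ w i) (hwr : ∑ i ∈ s.erase r, w i ≤ w r) (hdr : d r = 0)
    (t : ℝ) : ∑ i ∈ s, d i ≤ ∑ i ∈ s, |d i + w i * t| := by
  rcases le_or_gt 0 t with ht | ht
  · exact sum_le_sum fun i hi => (le_add_of_nonneg_right (mul_nonneg (hw i hi) ht)).trans
      (le_abs_self _)
  · rw [← add_sum_erase s _ hr, ← add_sum_erase s _ hr, hdr, zero_add, zero_add]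
    have hrest : ∑ i ∈ s.erase r, (d i + w i * t) ≤ ∑ i ∈ s.erase r, |d i + w i * t| :=
      sum_le_sum fun i _ => le_abs_self _
    rw [sum_add_distrib, ← sum_mul] at hrest
    have hroot : -(w r * t) ≤ |w r * t| := neg_le_abs _
    have hshift : 0 ≤ (∑ i ∈ s.erase r, w i - w r) * t :=
      mul_nonneg_of_nonpos_of_nonpos (by linarith) ht.le
    linarith

lemma sum_fin_two_pow (n : ℕ) : ∑ i : Fin n, (2 : ℝ) ^ (i : ℕ) = 2 ^ n - 1 := by
  rw [Fin.sum_univ_eq_sum_range (fun k => (2 : ℝ) ^ k), geom_sum_eq (by norm_num)]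
  norm_num

section CellTree

variable {l : ℕ}

lemma Cell.ext_val {c d : Cell l} (h₁ : (c.1 : ℕ) = d.1) (h₂ : (c.2.1 : ℕ) = d.2.1)
    (h₃ : (c.2.2 : ℕ) = d.2.2) : c = d := by
  obtain ⟨⟨i, hi⟩, ⟨a, ha⟩, ⟨b, hb⟩⟩ := c
  obtain ⟨⟨i', hi'⟩, ⟨a', ha'⟩, ⟨b', hb'⟩⟩ := d
  simp only at h₁ h₂ h₃
  subst h₁ h₂ h₃
  rfl

lemma isAncestor_refl (q : Cell l) : isAncestor q q := by
  simp [isAncestor]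

lemma isAncestor_root (c : Cell l) : isAncestor (rootCell l) c := by
  have hc : (c.1 : ℕ) ≤ l := c.1.is_le
  refine ⟨hc, ?_, ?_⟩ <;> exact Nat.div_eq_of_lt (by simp [rootCell])

lemma eq_of_isAncestor_of_level_eq {q c : Cell l} (h : isAncestor q c) (hl : (c.1 : ℕ) = q.1) :
    c = q := by
  obtain ⟨-, h₁, h₂⟩ := h
  rw [show (q.1 : ℕ) - c.1 = 0 by omega, pow_zero, Nat.div_one] at h₁ h₂
  exact Cell.ext_val hl h₁ h₂

lemma inCell_of_isAncestor {p : Pix l} {q c : Cell l} (hp : inCell p c) (hqc : isAncestor q c) :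
    inCell p q := by
  obtain ⟨hp₁, hp₂⟩ := hp
  obtain ⟨hle, h₁, h₂⟩ := hqc
  have hpow : (2 : ℕ) ^ (q.1 : ℕ) = 2 ^ (c.1 : ℕ) * 2 ^ ((q.1 : ℕ) - c.1) := by
    rw [← pow_add, Nat.add_sub_cancel' hle]
  constructor
  · rw [hpow, ← Nat.div_div_eq_div_mul, hp₁, h₁]
  · rw [hpow, ← Nat.div_div_eq_div_mul, hp₂, h₂]

lemma div_two_lt_two_pow_sub_min {a j : ℕ} (ha : a < 2 ^ (l - j)) :
    a / 2 < 2 ^ (l - min (j + 1) l) := by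
  refine Nat.div_lt_of_lt_mul (ha.trans_le ?_)
  rw [← pow_succ']
  exact Nat.pow_le_pow_right two_pos (by omega)

/-- The parent of a cell (a top-level cell is its own parent). -/
def parent (c : Cell l) : Cell l :=
  ⟨⟨min (c.1 + 1) l, by omega⟩, ⟨c.2.1 / 2, div_two_lt_two_pow_sub_min c.2.1.2⟩,
    ⟨c.2.2 / 2, div_two_lt_two_pow_sub_min c.2.2.2⟩⟩

lemma isChild_iff_parent_eq (c q : Cell l) : isChild c q ↔ (c.1 : ℕ) < l ∧ parent c = q := by
  have hq : (q.1 : ℕ) ≤ l := q.1.is_le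
  constructor
  · rintro ⟨h₀, h₁, h₂⟩
    exact ⟨by omega, Cell.ext_val (by simp only [parent]; omega) h₁ h₂⟩
  · rintro ⟨hc, rfl⟩
    exact ⟨by simp only [parent]; omega, rfl, rfl⟩

lemma isAncestor_parent_iff {q c : Cell l} (hc : (c.1 : ℕ) < l) :
    isAncestor q (parent c) ↔ isAncestor q c ∧ (c.1 : ℕ) < q.1 := by
  unfold isAncestor
  simp only [parent, Nat.div_div_eq_div_mul]
  rw [show min ((c.1 : ℕ) + 1) l = c.1 + 1 by omega]
  have hpow (hlt : (c.1 : ℕ) < q.1) :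
      2 * 2 ^ ((q.1 : ℕ) - (c.1 + 1)) = 2 ^ ((q.1 : ℕ) - c.1) := by
    rw [← pow_succ']
    congr 1
    omega
  constructor
  · rintro ⟨hle, h₁, h₂⟩
    rw [hpow hle] at h₁ h₂
    exact ⟨⟨by omega, h₁, h₂⟩, hle⟩
  · rintro ⟨⟨-, h₁, h₂⟩, hlt⟩
    rw [hpow hlt]
    exact ⟨hlt, h₁, h₂⟩

end CellTree

section Surplus

variable {l : ℕ}

lemma sum_sum_children_eq_sum_strict_descendants (q : Cell l) (f : Cell l → ℝ) :
    ∑ c ∈ univ.filter (isAncestor q ·), ∑ c' ∈ univ.filter (isChild · c), f c' =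
      ∑ c ∈ univ.filter (fun c => isAncestor q c ∧ (c.1 : ℕ) < q.1), f c := by
  have hchildren (c : Cell l) : univ.filter (isChild · c) =
      (univ.filter fun c' : Cell l => (c'.1 : ℕ) < l).filter (parent · = c) := by
    rw [filter_filter]
    exact filter_congr fun c' _ => isChild_iff_parent_eq c' c
  simp_rw [hchildren]
  rw [sum_fiberwise_eq_sum_filter, filter_filter]
  refine sum_congr (filter_congr fun c _ => ?_) fun _ _ => rfl
  rw [mem_filter, and_iff_right (mem_univ _)]
  constructor
  · rintro ⟨hc, hpar⟩
    exact (isAncestor_parent_iff hc).mp hpar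
  · rintro ⟨hqc, hlt⟩
    have hc : (c.1 : ℕ) < l := hlt.trans_le q.1.is_le
    exact ⟨hc, (isAncestor_parent_iff hc).mpr ⟨hqc, hlt⟩⟩

lemma filter_isAncestor_eq_insert (q : Cell l) :
    univ.filter (isAncestor q ·) =
      insert q (univ.filter fun c => isAncestor q c ∧ (c.1 : ℕ) < q.1) := by
  ext c
  simp only [mem_filter, mem_univ, true_and, mem_insert]
  constructor
  · intro hqc
    rcases hqc.1.eq_or_lt with hl | hl
    · exact Or.inl (eq_of_isAncestor_of_level_eq hqc hl)
    · exact Or.inr ⟨hqc, hl⟩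
  · rintro (rfl | ⟨hqc, -⟩)
    · exact isAncestor_refl c
    · exact hqc

/-- The surpluses telescope along the subtree of `q`. -/
lemma sum_surplus_descendants (b : Cell l → ℝ) (q : Cell l) :
    ∑ c ∈ univ.filter (isAncestor q ·), surplus b c = b q / 2 ^ (q.1 : ℕ) := by
  unfold surplus
  rw [sum_sub_distrib, sum_sum_children_eq_sum_strict_descendants, filter_isAncestor_eq_insert,
    sum_insert (by simp)]
  ring

lemma sum_surplus (b : Cell l → ℝ) : ∑ c, surplus b c = b (rootCell l) / 2 ^ l := by
  have hall : univ.filter (isAncestor (rootCell l) ·) = univ :=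
    filter_true_of_mem fun c _ => isAncestor_root c
  have h := sum_surplus_descendants b (rootCell l)
  rwa [hall] at h

end Surplus

section Pyramid

variable {l : ℕ}

noncomputable def placeMass (pick : Cell l → Pix l) (m : Cell l → ℝ) : Pix l → ℝ :=
  fun p => ∑ q ∈ univ.filter (fun q : Cell l => pick q = p), m q

lemma sum_placeMass (pick : Cell l → Pix l) (m : Cell l → ℝ) :
    ∑ p, placeMass pick m p = ∑ q, m q :=
  sum_fiberwise_of_maps_to (fun q _ => mem_univ (pick q)) m

lemma sum_inCell_placeMass (pick : Cell l → Pix l) (m : Cell l → ℝ) (q : Cell l) :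
    ∑ p ∈ univ.filter (inCell · q), placeMass pick m p =
      ∑ c ∈ univ.filter (fun c => inCell (pick c) q), m c := by
  simp only [placeMass]
  rw [sum_fiberwise_eq_sum_filter]
  simp only [mem_filter, mem_univ, true_and]

lemma le_pyr_placeMass_surplus {b : Cell l → ℝ} (hs : ∀ q, 0 ≤ surplus b q)
    {pick : Cell l → Pix l} (hpick : ∀ q, inCell (pick q) q) (q : Cell l) :
    b q ≤ pyr (placeMass pick (surplus b)) q := by
  have hdesc : univ.filter (isAncestor q ·) ⊆ univ.filter (fun c => inCell (pick c) q) :=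
    fun c => by simpa only [mem_filter, mem_univ, true_and] using inCell_of_isAncestor (hpick c)
  have hmass : b q / 2 ^ (q.1 : ℕ) ≤
      ∑ p ∈ univ.filter (inCell · q), placeMass pick (surplus b) p := by
    rw [sum_inCell_placeMass, ← sum_surplus_descendants]
    exact sum_le_sum_of_subset_of_nonneg hdesc fun c _ _ => hs c
  exact (div_le_iff₀' (by positivity)).1 hmass

end Pyramid

section Levels

variable {l : ℕ}

noncomputable def levelSum (v : Cell l → ℝ) (i : Fin (l + 1)) : ℝ :=
  ∑ q : Fin (2 ^ (l - i)) × Fin (2 ^ (l - i)), v ⟨i, q⟩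

lemma sum_levelSum (v : Cell l → ℝ) : ∑ i, levelSum v i = ∑ c, v c :=
  (Fintype.sum_sigma v).symm

lemma levelSum_sub (v w : Cell l → ℝ) (i : Fin (l + 1)) :
    levelSum (fun c => v c - w c) i = levelSum v i - levelSum w i :=
  sum_sub_distrib _ _

lemma sum_abs_levelSum_le_l1 (v : Cell l → ℝ) : ∑ i, |levelSum v i| ≤ l1 v := by
  rw [l1, ← sum_levelSum]
  exact sum_le_sum fun i _ => abs_sum_le_sum_abs _ _

lemma levelSum_last (v : Cell l → ℝ) : levelSum v (Fin.last l) = v (rootCell l) := by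
  let root : Fin (2 ^ (l - (Fin.last l : ℕ))) × Fin (2 ^ (l - (Fin.last l : ℕ))) :=
    ((rootCell l).2.1, (rootCell l).2.2)
  refine (Fintype.sum_eq_single root fun q hq => absurd ?_ hq).trans rfl
  have h₁ := q.1.is_lt
  have h₂ := q.2.is_lt
  simp only [Fin.val_last, Nat.sub_self, pow_zero, Nat.lt_one_iff] at h₁ h₂
  exact Prod.ext (Fin.ext h₁) (Fin.ext h₂)

lemma levelSum_pyr (x : Pix l → ℝ) (i : Fin (l + 1)) :
    levelSum (pyr x) i = 2 ^ (i : ℕ) * ∑ p, x p := by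
  let pos (p : Pix l) : Fin (2 ^ (l - i)) × Fin (2 ^ (l - i)) := (cellOf i p).2
  have hcell (q : Fin (2 ^ (l - i)) × Fin (2 ^ (l - i))) :
      univ.filter (inCell · ⟨i, q⟩) = univ.filter (pos · = q) := by
    refine filter_congr fun p _ => ?_
    simp only [pos, inCell, cellOf, Prod.ext_iff, Fin.ext_iff]
  simp only [levelSum, pyr, ← mul_sum, hcell]
  rw [sum_fiberwise_of_maps_to (fun p _ => mem_univ (pos p))]

/-- `2^i · b_root / 2^l` is the level-`i` sum of `P y` for every `y` of total mass
`b_root / 2^l`. -/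
noncomputable def levelDeficit (b : Cell l → ℝ) : ℝ :=
  ∑ i : Fin (l + 1), (2 ^ (i : ℕ) * (b (rootCell l) / 2 ^ l) - levelSum b i)

lemma levelDeficit_le_l1_sub_pyr (b : Cell l → ℝ) (y : Pix l → ℝ) :
    levelDeficit b ≤ l1 (fun c => b c - pyr y c) := by
  have hw :
      ∑ i ∈ univ.erase (Fin.last l), (2 : ℝ) ^ (i : ℕ) ≤ 2 ^ (Fin.last l : ℕ) := by
    have h := add_sum_erase univ (fun i : Fin (l + 1) => (2 : ℝ) ^ (i : ℕ))
      (mem_univ (Fin.last l))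
    rw [sum_fin_two_pow, Fin.val_last, pow_succ] at h
    rw [Fin.val_last]
    linarith
  have hroot : 2 ^ (Fin.last l : ℕ) * (b (rootCell l) / 2 ^ l) - levelSum b (Fin.last l) = 0 := by
    rw [levelSum_last, Fin.val_last]
    field_simp
    ring
  calc levelDeficit b
      ≤ ∑ i : Fin (l + 1), |(2 ^ (i : ℕ) * (b (rootCell l) / 2 ^ l) - levelSum b i)
          + 2 ^ (i : ℕ) * (∑ p, y p - b (rootCell l) / 2 ^ l)| :=
        sum_le_sum_abs_add_mul (mem_univ _) (fun i _ => by positivity) hw hroot _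
    _ = ∑ i, |levelSum (fun c => b c - pyr y c) i| := by
        refine sum_congr rfl fun i _ => ?_
        rw [levelSum_sub, levelSum_pyr, ← abs_neg]
        ring_nf
    _ ≤ l1 (fun c => b c - pyr y c) := sum_abs_levelSum_le_l1 _

lemma l1_sub_pyr_placeMass_surplus {b : Cell l → ℝ} (hs : ∀ q, 0 ≤ surplus b q)
    {pick : Cell l → Pix l} (hpick : ∀ q, inCell (pick q) q) :
    l1 (fun c => b c - pyr (placeMass pick (surplus b)) c) = levelDeficit b := by
  have hmass : ∑ p, placeMass pick (surplus b) p = b (rootCell l) / 2 ^ l :=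
    (sum_placeMass pick _).trans (sum_surplus b)
  have habs : (fun c => |b c - pyr (placeMass pick (surplus b)) c|) =
      fun c => pyr (placeMass pick (surplus b)) c - b c :=
    funext fun c => by rw [abs_of_nonpos (sub_nonpos.2 (le_pyr_placeMass_surplus hs hpick c)),
      neg_sub]
  rw [l1, habs, ← sum_levelSum, levelDeficit]
  refine sum_congr rfl fun i _ => ?_
  rw [levelSum_sub, levelSum_pyr, hmass]

lemma levelDeficit_eq {b : Cell l → ℝ} (hb : ∀ q, 0 ≤ b q) :
    levelDeficit b = (2 - (2 : ℝ) ^ (-(l : ℤ))) * b (rootCell l) - l1 b := by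
  have hl1 : l1 b = ∑ i, levelSum b i := by
    rw [sum_levelSum, l1]
    exact sum_congr rfl fun c _ => abs_of_nonneg (hb c)
  rw [levelDeficit, sum_sub_distrib, ← sum_mul, sum_fin_two_pow, hl1, zpow_neg, zpow_natCast,
    pow_succ]
  field_simp

end Levels

/-- Exact inversion of the pyramid transform when all surpluses are
nonnegative: placing mass `s_q` at an arbitrary pixel of each cell `q`
minimizes `‖b - Py‖₁`, and the minimum equals
`(2 - 2^{-log Δ})·b_r - ‖b‖₁`. -/
theorem stmt3 {l : ℕ} (b : Cell l → ℝ) (hb : ∀ q, 0 ≤ b q)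
    (hs : ∀ q, 0 ≤ surplus b q)
    (pick : Cell l → Pix l) (hpick : ∀ q, inCell (pick q) q)
    (y : Pix l → ℝ)
    (hy : y = fun p => ∑ q ∈ Finset.univ.filter (fun q : Cell l => pick q = p), surplus b q) :
    (∀ y' : Pix l → ℝ, l1 (fun c => b c - pyr y c) ≤ l1 (fun c => b c - pyr y' c)) ∧
    l1 (fun c => b c - pyr y c) = (2 - (2:ℝ)^(-(l:ℤ))) * b (rootCell l) - l1 b := by
  obtain rfl : y = placeMass pick (surplus b) := hy
  rw [l1_sub_pyr_placeMass_surplus hs hpick]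
  exact ⟨levelDeficit_le_l1_sub_pyr b, levelDeficit_eq hb⟩
end

section
/- Suppose the support-finding procedure satisfies, at every level i: with T_i the 2s selected nodes at level i, f_i = ‖y_{G_{i+1} \ T_{i+1}}‖₁ the mass missed above level i, c_i the s-th largest value of y on T_i, and w_i the maximum value of y on C(T_{i+1}) \ T_i, that w_i ≤ max{f_i/(4s), 2c_i}. Let y' ∈ M have support U of width at most s per level. Then for each level, ‖y_{V_i}‖₁ ≤ f_i/4 + 2‖y_{T_i \ U}‖₁ where V_i = U ∩ C(T_{i+1}) \ T_i, and summing over levels with the subtree-mass bound yields ‖y_{S̄}‖₁ ≤ 10‖y − y'‖₁ for S = ∪ T_i (together with all top levels). -/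
open scoped Classical BigOperators

/-- All cells at level `i`. -/
noncomputable def levelCells (l : ℕ) (i : ℕ) : Finset (Cell l) :=
  Finset.univ.filter (fun c : Cell l => (c.1 : ℕ) = i)

/-- The cells that are children of some cell of `A`. -/
noncomputable def childrenOf {l : ℕ} (A : Finset (Cell l)) : Finset (Cell l) :=
  Finset.univ.filter (fun c : Cell l => ∃ q ∈ A, isChild c q)

lemma my_child_unique {l : ℕ} {c q q' : Cell l} (h : isChild c q) (h' : isChild c q') :
    q = q' := by
  obtain ⟨h1, h2, h3⟩ := h
  obtain ⟨h1', h2', h3'⟩ := h'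
  obtain ⟨a, b, d⟩ := q
  obtain ⟨a', b', d'⟩ := q'
  simp only at h1 h2 h3 h1' h2' h3'
  have ha : a = a' := Fin.ext (by omega)
  subst ha
  have hb : b = b' := Fin.ext (by omega)
  have hd : d = d' := Fin.ext (by omega)
  subst hb; subst hd; rfl

lemma my_exists_parent {l : ℕ} (c : Cell l) (h : (c.1:ℕ) < l) :
    ∃ q : Cell l, isChild c q ∧ isAncestor q c := by
  have h1 : (c.1:ℕ) + 1 < l + 1 := by omega
  have hb : (c.2.1:ℕ)/2 < 2^(l - ((c.1:ℕ)+1)) := by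
    refine (Nat.div_lt_iff_lt_mul (by norm_num)).mpr ?_
    have hp : 2^(l - (c.1:ℕ)) = 2^(l - ((c.1:ℕ)+1)) * 2 := by
      rw [← pow_succ]; congr 1; omega
    have := c.2.1.2
    omega
  have hd : (c.2.2:ℕ)/2 < 2^(l - ((c.1:ℕ)+1)) := by
    refine (Nat.div_lt_iff_lt_mul (by norm_num)).mpr ?_
    have hp : 2^(l - (c.1:ℕ)) = 2^(l - ((c.1:ℕ)+1)) * 2 := by
      rw [← pow_succ]; congr 1; omega
    have := c.2.2.2
    omega
  refine ⟨⟨⟨(c.1:ℕ)+1, h1⟩, ⟨(c.2.1:ℕ)/2, hb⟩, ⟨(c.2.2:ℕ)/2, hd⟩⟩,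
    ⟨rfl, rfl, rfl⟩, Nat.le_succ _, ?_, ?_⟩ <;>
  · show (_ : ℕ) / 2^((c.1:ℕ)+1 - (c.1:ℕ)) = _
    have he : (c.1:ℕ)+1 - (c.1:ℕ) = 1 := by omega
    rw [he, pow_one]

lemma my_recur_sum (F E : ℕ → ℝ) (i₀ L : ℕ) (hi₀ : i₀ ≤ L)
    (hFnn : ∀ j, 0 ≤ F j) (hEnn : ∀ j, 0 ≤ E j) (hFtop : F i₀ = 0)
    (key : ∀ i, i < i₀ → F i ≤ 3/4 * F (i+1) + (2 * E i + 1/2 * E (i+1))) :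
    ∑ i ∈ Finset.range i₀, F i ≤ 10 * ∑ j ∈ Finset.range (L+1), E j := by
  have hshift : ∑ i ∈ Finset.range i₀, F (i+1) ≤ ∑ i ∈ Finset.range i₀, F i := by
    have h1 : ∑ i ∈ Finset.range (i₀+1), F i
        = ∑ i ∈ Finset.range i₀, F (i+1) + F 0 := Finset.sum_range_succ' F i₀
    have h2 : ∑ i ∈ Finset.range (i₀+1), F i
        = ∑ i ∈ Finset.range i₀, F i + F i₀ := Finset.sum_range_succ F i₀
    have := hFnn 0
    linarith [hFtop ▸ h2 ▸ h1]
  have hkeysum : ∑ i ∈ Finset.range i₀, F i ≤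
      3/4 * ∑ i ∈ Finset.range i₀, F (i+1)
      + (2 * ∑ i ∈ Finset.range i₀, E i + 1/2 * ∑ i ∈ Finset.range i₀, E (i+1)) := by
    calc ∑ i ∈ Finset.range i₀, F i
        ≤ ∑ i ∈ Finset.range i₀, (3/4 * F (i+1) + (2 * E i + 1/2 * E (i+1))) :=
          Finset.sum_le_sum (fun i hi => key i (Finset.mem_range.mp hi))
      _ = _ := by
          simp only [Finset.sum_add_distrib, Finset.mul_sum]
  have hE1 : ∑ i ∈ Finset.range i₀, E i ≤ ∑ j ∈ Finset.range (L+1), E j :=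
    Finset.sum_le_sum_of_subset_of_nonneg
      (Finset.range_subset_range.mpr (by omega)) (fun j _ _ => hEnn j)
  have hE2 : ∑ i ∈ Finset.range i₀, E (i+1) ≤ ∑ j ∈ Finset.range (L+1), E j := by
    have h1 : ∑ i ∈ Finset.range (i₀+1), E i
        = ∑ i ∈ Finset.range i₀, E (i+1) + E 0 := Finset.sum_range_succ' E i₀
    have h2 : ∑ i ∈ Finset.range (i₀+1), E i ≤ ∑ j ∈ Finset.range (L+1), E j :=
      Finset.sum_le_sum_of_subset_of_nonneg
        (Finset.range_subset_range.mpr (by omega)) (fun j _ _ => hEnn j)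
    have := hEnn 0
    linarith
  linarith
/-- Analysis of the greedy top-down support finder: if at every level the
maximum skipped value `w_i` satisfies `w_i ≤ max(f_i/(4s), 2c_i)`, then for
any `y'` in the model (nonnegative, rooted-subtree support `U` of width `≤ s`,
each entry at least twice the sum of its children), the per-level loss obeys
`‖y_{V_i}‖₁ ≤ f_i/4 + 2‖y_{T_i∖U}‖₁`, and overall
`‖y_{S̄}‖₁ ≤ 10‖y - y'‖₁` for `S = ∪ T_i` (all levels `≥ i₀` fully kept). -/
theorem stmt11 {l : ℕ} (s i₀ : ℕ) (hs : 1 ≤ s) (hi₀ : i₀ ≤ l)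
    (y : Cell l → ℝ) (hy : ∀ c, 0 ≤ y c)
    (T : ℕ → Finset (Cell l))
    (hTlev : ∀ i, ∀ c ∈ T i, (c.1 : ℕ) = i)
    (hTsub : ∀ i, i < i₀ → T i ⊆ childrenOf (T (i+1)))
    (hTcard : ∀ i, (T i).card ≤ 2 * s)
    (htop : ∀ c : Cell l, i₀ ≤ (c.1 : ℕ) → c ∈ T (c.1 : ℕ))
    -- `cval i` is the `s`-th largest value of `y` on `T i`
    (cval : ℕ → ℝ)
    (hcval : ∀ i, i < i₀ → s ≤ ((T i).filter (fun q => cval i ≤ y q)).card)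
    -- the maximum skipped value is controlled:  `wᵢ ≤ max (fᵢ/4s) (2cᵢ)`
    (hw : ∀ i, i < i₀ → ∀ c ∈ childrenOf (T (i+1)), c ∉ T i →
      y c ≤ max ((∑ q ∈ levelCells l (i+1) \ T (i+1), y q) / (4 * s)) (2 * cval i))
    -- `y'` lies in the model `M`, with support `U` of width at most `s`
    (y' : Cell l → ℝ) (hy' : ∀ c, 0 ≤ y' c)
    (U : Finset (Cell l)) (hUanc : AncClosed U)
    (hUwidth : ∀ i : ℕ, ((U.filter (fun c => (c.1 : ℕ) = i)).card) ≤ s)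
    (hUsupp : ∀ c, y' c ≠ 0 → c ∈ U)
    (hmod : ∀ q : Cell l,
      2 * ∑ c ∈ Finset.univ.filter (fun c : Cell l => isChild c q), y' c ≤ y' q) :
    (∀ i, i < i₀ →
      ∑ c ∈ (U ∩ childrenOf (T (i+1))) \ T i, y c
        ≤ (∑ q ∈ levelCells l (i+1) \ T (i+1), y q) / 4
          + 2 * ∑ c ∈ T i \ U, y c) ∧
    ∑ c ∈ Finset.univ.filter (fun c : Cell l => c ∉ T (c.1 : ℕ)), y c
      ≤ 10 * ∑ c, |y c - y' c| := by
  classical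
  have hyU : ∀ c : Cell l, c ∉ U → y' c = 0 := fun c hc => by
    by_contra h; exact hc (hUsupp c h)
  have hChLev : ∀ i : ℕ, ∀ c ∈ childrenOf (T (i+1)), (c.1:ℕ) = i := by
    intro i c hc
    simp only [childrenOf, Finset.mem_filter] at hc
    obtain ⟨-, q, hq, hcq⟩ := hc
    have h1 := hTlev (i+1) q hq
    have h2 := hcq.1
    omega
  have part1 : ∀ i, i < i₀ →
      ∑ c ∈ (U ∩ childrenOf (T (i+1))) \ T i, y c
        ≤ (∑ q ∈ levelCells l (i+1) \ T (i+1), y q) / 4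
          + 2 * ∑ c ∈ T i \ U, y c := by
    intro i hi
    set Vi := (U ∩ childrenOf (T (i+1))) \ T i with hVi
    set Fn := ∑ q ∈ levelCells l (i+1) \ T (i+1), y q with hFn
    have hFnn : 0 ≤ Fn := Finset.sum_nonneg fun c _ => hy c
    have htnn : 0 ≤ ∑ c ∈ T i \ U, y c := Finset.sum_nonneg fun c _ => hy c
    have hcard : Vi.card ≤ s := by
      have hsub : Vi ⊆ U.filter (fun c => (c.1:ℕ) = i) := by
        intro c hc
        simp only [hVi, Finset.mem_sdiff, Finset.mem_inter] at hc
        exact Finset.mem_filter.mpr ⟨hc.1.1, hChLev i c hc.1.2⟩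
      exact le_trans (Finset.card_le_card hsub) (hUwidth i)
    have hbound : ∀ c ∈ Vi, y c ≤ max (Fn / (4*s)) (2 * cval i) := by
      intro c hc
      simp only [hVi, Finset.mem_sdiff, Finset.mem_inter] at hc
      exact hw i hi c hc.1.2 hc.2
    have hsum : ∑ c ∈ Vi, y c ≤ (Vi.card : ℝ) * max (Fn / (4*s)) (2 * cval i) := by
      calc ∑ c ∈ Vi, y c ≤ Vi.card • max (Fn / (4*s)) (2 * cval i) :=
            Finset.sum_le_card_nsmul _ _ _ hbound
        _ = (Vi.card : ℝ) * max (Fn/(4*s)) (2 * cval i) := nsmul_eq_mul _ _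
    rcases le_total (2 * cval i) (Fn / (4*s)) with hmax | hmax
    · rw [max_eq_left hmax] at hsum
      have h1 : (Vi.card : ℝ) * (Fn / (4*s)) ≤ (s:ℝ) * (Fn/(4*s)) := by
        apply mul_le_mul_of_nonneg_right
        · exact_mod_cast hcard
        · positivity
      have hs0 : (s:ℝ) ≠ 0 := by positivity
      have hss : (s:ℝ) * (Fn/(4*s)) = Fn/4 := by
        field_simp
      linarith
    · rw [max_eq_right hmax] at hsum
      have hs0 : (0:ℝ) < (s:ℝ) := by positivity
      have hcnn : 0 ≤ cval i := by
        have h0 : 0 ≤ Fn/(4*(s:ℝ)) := by positivity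
        linarith
      set A := (T i).filter (fun q => cval i ≤ y q) with hA
      have hAcard : s ≤ A.card := hcval i hi
      have hdisj : Disjoint (A ∩ U) Vi := by
        apply Finset.disjoint_left.mpr
        intro c hc1 hc2
        have hcT : c ∈ T i := (Finset.mem_filter.mp (Finset.mem_inter.mp hc1).1).1
        exact (Finset.mem_sdiff.mp hc2).2 hcT
      have hsubU : (A ∩ U) ∪ Vi ⊆ U.filter (fun c => (c.1:ℕ) = i) := by
        intro c hc
        rcases Finset.mem_union.mp hc with h | h
        · have hcU : c ∈ U := (Finset.mem_inter.mp h).2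
          have hcT : c ∈ T i := (Finset.mem_filter.mp (Finset.mem_inter.mp h).1).1
          exact Finset.mem_filter.mpr ⟨hcU, hTlev i c hcT⟩
        · have := Finset.mem_sdiff.mp h
          exact Finset.mem_filter.mpr ⟨(Finset.mem_inter.mp this.1).1,
            hChLev i c (Finset.mem_inter.mp this.1).2⟩
      have hcc : (A ∩ U).card + Vi.card ≤ s := by
        rw [← Finset.card_union_of_disjoint hdisj]
        exact le_trans (Finset.card_le_card hsubU) (hUwidth i)
      have hAU : Vi.card ≤ (A \ U).card := by
        have := Finset.card_inter_add_card_sdiff A U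
        omega
      have h1 : (Vi.card : ℝ) * cval i ≤ ∑ c ∈ A \ U, y c := by
        calc (Vi.card:ℝ) * cval i ≤ ((A\U).card : ℝ) * cval i := by
              apply mul_le_mul_of_nonneg_right _ hcnn; exact_mod_cast hAU
          _ = ((A\U).card : ℕ) • cval i := (nsmul_eq_mul _ _).symm
          _ ≤ ∑ c ∈ A\U, y c := by
              apply Finset.card_nsmul_le_sum
              intro c hc
              have hcA : c ∈ A := (Finset.mem_sdiff.mp hc).1
              exact (Finset.mem_filter.mp hcA).2
      have h2 : ∑ c ∈ A \ U, y c ≤ ∑ c ∈ T i \ U, y c := by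
        apply Finset.sum_le_sum_of_subset_of_nonneg
        · intro c hc
          rw [Finset.mem_sdiff] at hc ⊢
          exact ⟨(Finset.mem_filter.mp hc.1).1, hc.2⟩
        · exact fun c _ _ => hy c
      have hmul : (Vi.card:ℝ) * (2*cval i) = 2*((Vi.card:ℝ)*cval i) := by ring
      linarith
  refine ⟨part1, ?_⟩
  -- the per-level recursion inequality
  have key : ∀ i, i < i₀ →
      (∑ c ∈ levelCells l i \ T i, y c)
        ≤ 3/4 * (∑ c ∈ levelCells l (i+1) \ T (i+1), y c)
          + (2 * (∑ c ∈ levelCells l i, |y c - y' c|)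
             + 1/2 * (∑ c ∈ levelCells l (i+1), |y c - y' c|)) := by
    intro i hi
    have hp1 := part1 i hi
    have hil : i < l := lt_of_lt_of_le hi hi₀
    set Ch := childrenOf (T (i+1)) with hCh
    set Ai := levelCells l i \ T i with hAi
    set B1 := Ai.filter (fun c => c ∉ U) with hB1
    set Vi := (U ∩ Ch) \ T i with hVi
    set Wi := (Ai.filter (fun c => c ∈ U)).filter (fun c => c ∉ Ch) with hWi
    set B3 := T i \ U with hB3
    set Q := ((levelCells l (i+1)).filter (fun c => c ∈ U)) \ T (i+1) with hQdef
    -- split F i into B1 and the U-part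
    have hsplit1 : ∑ c ∈ Ai, y c
        = ∑ c ∈ Ai.filter (fun c => c ∈ U), y c + ∑ c ∈ B1, y c :=
      (Finset.sum_filter_add_sum_filter_not Ai (fun c => c ∈ U) y).symm
    have hsplit2 : Ai.filter (fun c => c ∈ U) = Vi ∪ Wi := by
      ext c
      simp only [hWi, hVi, hAi, Finset.mem_filter, Finset.mem_sdiff, Finset.mem_union,
        Finset.mem_inter, levelCells, Finset.mem_univ, true_and]
      constructor
      · rintro ⟨⟨hlev, hT⟩, hU⟩
        by_cases hch : c ∈ Ch
        · exact Or.inl ⟨⟨hU, hch⟩, hT⟩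
        · exact Or.inr ⟨⟨⟨hlev, hT⟩, hU⟩, hch⟩
      · rintro (⟨⟨hU, hch⟩, hT⟩ | ⟨⟨⟨hlev, hT⟩, hU⟩, hch⟩)
        · exact ⟨⟨hChLev i c hch, hT⟩, hU⟩
        · exact ⟨⟨hlev, hT⟩, hU⟩
    have hdisjVW : Disjoint Vi Wi := by
      apply Finset.disjoint_left.mpr
      intro c hc1 hc2
      exact (Finset.mem_filter.mp hc2).2 (Finset.mem_inter.mp (Finset.mem_sdiff.mp hc1).1).2
    have hsum2 : ∑ c ∈ Ai.filter (fun c => c ∈ U), y c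
        = ∑ c ∈ Vi, y c + ∑ c ∈ Wi, y c := by
      rw [hsplit2, Finset.sum_union hdisjVW]
    -- bound the Wi part via parents
    have hWsub : Wi ⊆ Q.biUnion (fun q => Finset.univ.filter (fun c => isChild c q)) := by
      intro c hc
      simp only [hWi, hAi, Finset.mem_filter, Finset.mem_sdiff, levelCells,
        Finset.mem_univ, true_and] at hc
      obtain ⟨⟨⟨hclev, hcT⟩, hcU⟩, hcCh⟩ := hc
      have hcl : (c.1:ℕ) < l := by omega
      obtain ⟨q, hq1, hq2⟩ := my_exists_parent c hcl
      have hqU : q ∈ U := hUanc c hcU q hq2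
      have hqlev : (q.1:ℕ) = i + 1 := by rw [hq1.1, hclev]
      have hqT : q ∉ T (i+1) := by
        intro hqT
        apply hcCh
        simp only [hCh, childrenOf, Finset.mem_filter, Finset.mem_univ, true_and]
        exact ⟨q, hqT, hq1⟩
      apply Finset.mem_biUnion.mpr
      refine ⟨q, ?_, by simp [hq1]⟩
      simp only [hQdef, Finset.mem_sdiff, Finset.mem_filter, levelCells,
        Finset.mem_univ, true_and]
      exact ⟨⟨hqlev, hqU⟩, hqT⟩
    have hpd : (Q : Set (Cell l)).PairwiseDisjoint
        (fun q => Finset.univ.filter (fun c => isChild c q)) := by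
      intro q1 _ q2 _ hne
      apply Finset.disjoint_left.mpr
      intro c hc1 hc2
      exact hne (my_child_unique (Finset.mem_filter.mp hc1).2 (Finset.mem_filter.mp hc2).2)
    have hW' : ∑ c ∈ Wi, y' c ≤ 1/2 * ∑ q ∈ Q, y' q := by
      calc ∑ c ∈ Wi, y' c
          ≤ ∑ c ∈ Q.biUnion (fun q => Finset.univ.filter (fun c => isChild c q)), y' c :=
            Finset.sum_le_sum_of_subset_of_nonneg hWsub (fun c _ _ => hy' c)
        _ = ∑ q ∈ Q, ∑ c ∈ Finset.univ.filter (fun c => isChild c q), y' c :=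
            Finset.sum_biUnion hpd
        _ ≤ ∑ q ∈ Q, y' q / 2 := Finset.sum_le_sum (fun q _ => by
            have := hmod q; linarith)
        _ = 1/2 * ∑ q ∈ Q, y' q := by rw [← Finset.sum_div]; ring
    have hQ1 : ∑ q ∈ Q, y' q ≤ ∑ q ∈ Q, y q + ∑ q ∈ Q, |y q - y' q| := by
      rw [← Finset.sum_add_distrib]
      refine Finset.sum_le_sum (fun q _ => ?_)
      have := neg_abs_le (y q - y' q)
      linarith
    have hQ2 : ∑ q ∈ Q, y q ≤ ∑ q ∈ levelCells l (i+1) \ T (i+1), y q := by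
      refine Finset.sum_le_sum_of_subset_of_nonneg ?_ (fun c _ _ => hy c)
      intro c hc
      rw [hQdef, Finset.mem_sdiff, Finset.mem_filter] at hc
      exact Finset.mem_sdiff.mpr ⟨hc.1.1, hc.2⟩
    have hQ3 : ∑ q ∈ Q, |y q - y' q| ≤ ∑ c ∈ levelCells l (i+1), |y c - y' c| := by
      refine Finset.sum_le_sum_of_subset_of_nonneg ?_ (fun c _ _ => abs_nonneg _)
      intro c hc
      rw [hQdef, Finset.mem_sdiff, Finset.mem_filter] at hc
      exact hc.1.1
    -- pointwise identities
    have hB1eq : ∑ c ∈ B1, y c = ∑ c ∈ B1, |y c - y' c| := by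
      refine Finset.sum_congr rfl (fun c hc => ?_)
      have hcU : c ∉ U := (Finset.mem_filter.mp hc).2
      rw [hyU c hcU, sub_zero, abs_of_nonneg (hy c)]
    have hB3eq : ∑ c ∈ B3, y c = ∑ c ∈ B3, |y c - y' c| := by
      refine Finset.sum_congr rfl (fun c hc => ?_)
      have hcU : c ∉ U := (Finset.mem_sdiff.mp hc).2
      rw [hyU c hcU, sub_zero, abs_of_nonneg (hy c)]
    have hWy : ∑ c ∈ Wi, y c ≤ ∑ c ∈ Wi, y' c + ∑ c ∈ Wi, |y c - y' c| := by
      rw [← Finset.sum_add_distrib]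
      refine Finset.sum_le_sum (fun c _ => ?_)
      have := le_abs_self (y c - y' c)
      linarith
    -- the three disjoint pieces at level i
    have hd1 : Disjoint B1 Wi := by
      apply Finset.disjoint_left.mpr
      intro c h1 h2
      exact (Finset.mem_filter.mp h1).2 (Finset.mem_filter.mp (Finset.mem_filter.mp h2).1).2
    have hd2 : Disjoint (B1 ∪ Wi) B3 := by
      apply Finset.disjoint_left.mpr
      intro c hc hc3
      have hcT : c ∈ T i := (Finset.mem_sdiff.mp hc3).1
      rcases Finset.mem_union.mp hc with h | h
      · exact (Finset.mem_sdiff.mp (Finset.mem_filter.mp h).1).2 hcT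
      · exact (Finset.mem_sdiff.mp
          (Finset.mem_filter.mp (Finset.mem_filter.mp h).1).1).2 hcT
    have hsubL : (B1 ∪ Wi) ∪ B3 ⊆ levelCells l i := by
      intro c hc
      simp only [levelCells, Finset.mem_filter, Finset.mem_univ, true_and]
      rcases Finset.mem_union.mp hc with h | h
      · rcases Finset.mem_union.mp h with h' | h'
        · have := Finset.mem_sdiff.mp (Finset.mem_filter.mp h').1
          simpa [levelCells] using this.1
        · have := Finset.mem_sdiff.mp
            (Finset.mem_filter.mp (Finset.mem_filter.mp h').1).1
          simpa [levelCells] using this.1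
      · exact hTlev i c (Finset.mem_sdiff.mp h).1
    have hsum3 : ∑ c ∈ B1, |y c - y' c| + ∑ c ∈ Wi, |y c - y' c|
        + ∑ c ∈ B3, |y c - y' c| ≤ ∑ c ∈ levelCells l i, |y c - y' c| := by
      rw [← Finset.sum_union hd1, ← Finset.sum_union hd2]
      exact Finset.sum_le_sum_of_subset_of_nonneg hsubL (fun c _ _ => abs_nonneg _)
    have hBnn1 : 0 ≤ ∑ c ∈ B1, |y c - y' c| := Finset.sum_nonneg (fun c _ => abs_nonneg _)
    have hBnn2 : 0 ≤ ∑ c ∈ Wi, |y c - y' c| := Finset.sum_nonneg (fun c _ => abs_nonneg _)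
    have hBnn3 : 0 ≤ ∑ c ∈ B3, |y c - y' c| := Finset.sum_nonneg (fun c _ => abs_nonneg _)
    linarith
  have hFtop' : ∀ j, i₀ ≤ j → ∑ c ∈ levelCells l j \ T j, y c = 0 := by
    intro j hj
    apply Finset.sum_eq_zero
    intro c hc
    exfalso
    rw [Finset.mem_sdiff] at hc
    have hlev : (c.1:ℕ) = j := by simpa [levelCells] using hc.1
    exact hc.2 (hlev ▸ htop c (by omega))
  have hNsplit : ∑ c, |y c - y' c|
      = ∑ j ∈ Finset.range (l+1), ∑ c ∈ levelCells l j, |y c - y' c| :=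
    (Finset.sum_fiberwise_of_maps_to (fun c _ => Finset.mem_range.mpr c.1.2) _).symm
  have hLHSsplit : ∑ c ∈ Finset.univ.filter (fun c : Cell l => c ∉ T (c.1 : ℕ)), y c
      = ∑ j ∈ Finset.range (l+1), ∑ c ∈ levelCells l j \ T j, y c := by
    rw [← Finset.sum_fiberwise_of_maps_to
      (fun c (_ : c ∈ Finset.univ.filter (fun c : Cell l => c ∉ T (c.1:ℕ))) =>
        Finset.mem_range.mpr c.1.2) y]
    refine Finset.sum_congr rfl (fun j _ => ?_)
    refine Finset.sum_congr ?_ (fun c _ => rfl)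
    ext c
    simp only [Finset.mem_filter, Finset.mem_univ, true_and, Finset.mem_sdiff, levelCells]
    constructor
    · rintro ⟨h1, h2⟩; exact ⟨h2, by rwa [h2] at h1⟩
    · rintro ⟨h1, h2⟩; exact ⟨by rwa [h1], h1⟩
  have hrange : ∑ j ∈ Finset.range (l+1), ∑ c ∈ levelCells l j \ T j, y c
      = ∑ j ∈ Finset.range i₀, ∑ c ∈ levelCells l j \ T j, y c := by
    symm
    apply Finset.sum_subset (Finset.range_subset_range.mpr (by omega))
    intro j _ hj
    refine hFtop' j ?_
    simp only [Finset.mem_range, not_lt] at hj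
    exact hj
  calc ∑ c ∈ Finset.univ.filter (fun c : Cell l => c ∉ T (c.1 : ℕ)), y c
      = ∑ j ∈ Finset.range i₀, ∑ c ∈ levelCells l j \ T j, y c := by
        rw [hLHSsplit, hrange]
    _ ≤ 10 * ∑ j ∈ Finset.range (l+1), ∑ c ∈ levelCells l j, |y c - y' c| :=
        my_recur_sum (fun j => ∑ c ∈ levelCells l j \ T j, y c)
          (fun j => ∑ c ∈ levelCells l j, |y c - y' c|) i₀ l hi₀
          (fun j => Finset.sum_nonneg (fun c _ => hy c))
          (fun j => Finset.sum_nonneg (fun c _ => abs_nonneg _))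
          (hFtop' i₀ le_rfl) key
    _ = 10 * ∑ c, |y c - y' c| := by rw [← hNsplit]
end

section
/- For a nonnegative vector x ∈ ℝ₊^([Δ]²), any cell C at level i, the pyramid row u (entries 2^i on C, zero elsewhere) and any of the three Haar-type rows v of the rescaled wavelet transform W corresponding to C (entries ±2^{i−2} on C, zero elsewhere): |v · x| ≤ (1/4)|u · x|. Consequently, if S is a set of cells with ‖(Px)_{S̄}‖₁ ≤ ε·E, then the support S' of Wx obtained by taking the constant coefficient plus the three wavelet coefficients of each cell in S satisfies ‖(Wx)_{S̄'}‖₁ ≤ (3/4)ε·E. -/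
open scoped Classical BigOperators

/-- Row indices of the two-dimensional non-standard Haar transform: the
constant vector, plus three rows (horizontal, vertical, diagonal) for each
cell at each level `i+1`, `i < l`. -/
abbrev RIdx (l : ℕ) := Unit ⊕ (Σ i : Fin l, Fin 3 × Fin (2^(l-((i:ℕ)+1))) × Fin (2^(l-((i:ℕ)+1))))

/-- The rescaled non-standard two-dimensional Haar wavelet transform `W`:
the constant row has entries `1/n³` (`n = Δ² = 4^l`), and the three rows for
a cell at level `m = i+1` have entries of magnitude `2^(m-2)` with signs given
by the horizontal / vertical / diagonal splits of the cell. -/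
noncomputable def haarW (l : ℕ) : Matrix (RIdx l) (Pix l) ℝ :=
  fun r p =>
    match r with
    | Sum.inl _ => 1 / ((4:ℝ)^l)^3
    | Sum.inr q =>
      let m : ℕ := (q.1 : ℕ) + 1
      let t : Fin 3 := q.2.1
      let a := q.2.2.1
      let b := q.2.2.2
      if (p.1 : ℕ) / 2^m = (a : ℕ) ∧ (p.2 : ℕ) / 2^m = (b : ℕ) then
        (2:ℝ)^((m:ℤ) - 2) *
          (if (t : ℕ) = 0 then (if (p.1 : ℕ) % 2^m < 2^(m-1) then 1 else -1)
           else if (t : ℕ) = 1 then (if (p.2 : ℕ) % 2^m < 2^(m-1) then 1 else -1)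
           else (if (p.1 : ℕ) % 2^m < 2^(m-1) then (1:ℝ) else -1) *
                (if (p.2 : ℕ) % 2^m < 2^(m-1) then 1 else -1))
      else 0

/-- The cell corresponding to a wavelet row (none for the constant row). -/
def cellOfRow {l : ℕ} : RIdx l → Option (Cell l)
  | Sum.inl _ => none
  | Sum.inr q => some ⟨⟨(q.1 : ℕ) + 1, Nat.succ_lt_succ q.1.2⟩, (q.2.2.1, q.2.2.2)⟩

/-!
On a cell `C` of level `i ≥ 1` the three Haar rows of `C` have entries `±2^(i-2)`, a quarter of
the pyramid row `2^i • 𝟙_C`; against a nonnegative `x` the signs can only cancel, so each wavelet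
coefficient is at most a quarter of the pyramid coefficient of `C`. Every cell carries exactly three
wavelet rows, so the wavelet mass outside `S'` is at most `3/4` of the pyramid mass outside `S`.
-/

open Finset

theorem Finset.abs_sum_mul_le_of_abs_le {ι R : Type*} [CommRing R] [LinearOrder R]
    [IsStrictOrderedRing R] (s : Finset ι) {v u x : ι → R} {c : R}
    (hx : ∀ j ∈ s, 0 ≤ x j) (hvu : ∀ j ∈ s, |v j| ≤ c * u j) :
    |∑ j ∈ s, v j * x j| ≤ c * ∑ j ∈ s, u j * x j :=
  calc |∑ j ∈ s, v j * x j| ≤ ∑ j ∈ s, |v j| * x j := by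
        refine (abs_sum_le_sum_abs _ _).trans_eq (sum_congr rfl fun j hj => ?_)
        rw [abs_mul, abs_of_nonneg (hx j hj)]
    _ ≤ ∑ j ∈ s, c * u j * x j :=
        sum_le_sum fun j hj => mul_le_mul_of_nonneg_right (hvu j hj) (hx j hj)
    _ = c * ∑ j ∈ s, u j * x j := by simp only [mul_sum, mul_assoc]

theorem Finset.sum_comp_le_mul_sum {ι κ R : Type*} [Fintype ι] [Fintype κ] [DecidableEq κ]
    [CommSemiring R] [PartialOrder R] [IsOrderedRing R] (g : ι → κ) {f : κ → R} (hf : 0 ≤ f)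
    {n : ℕ} (hg : ∀ j, #{i | g i = j} ≤ n) :
    ∑ i, f (g i) ≤ n * ∑ j, f j := by
  rw [← sum_fiberwise' univ g f, mul_sum]
  refine sum_le_sum fun j _ => ?_
  rw [sum_const, nsmul_eq_mul]
  exact mul_le_mul_of_nonneg_right (Nat.mono_cast (hg j)) (hf j)

theorem pyr_eq_sum {l : ℕ} (x : Pix l → ℝ) (c : Cell l) :
    pyr x c = ∑ p, (if inCell p c then (2:ℝ) ^ (c.1 : ℕ) else 0) * x p := by
  simp only [pyr, sum_filter, mul_sum, ite_mul, zero_mul, mul_ite, mul_zero]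

theorem pyr_nonneg {l : ℕ} {x : Pix l → ℝ} (hx : ∀ p, 0 ≤ x p) (c : Cell l) :
    0 ≤ pyr x c :=
  mul_nonneg (by positivity) (sum_nonneg fun p _ => hx p)

abbrev WaveletIdx (l : ℕ) := Σ i : Fin l, Fin 3 × Fin (2^(l-((i:ℕ)+1))) × Fin (2^(l-((i:ℕ)+1)))

def WaveletIdx.cell {l : ℕ} (q : WaveletIdx l) : Cell l :=
  ⟨⟨(q.1 : ℕ) + 1, Nat.succ_lt_succ q.1.2⟩, (q.2.2.1, q.2.2.2)⟩

theorem cellOfRow_inr {l : ℕ} (q : WaveletIdx l) : cellOfRow (Sum.inr q) = some q.cell := rfl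

theorem abs_haarW_inr {l : ℕ} (q : WaveletIdx l) (p : Pix l) :
    |haarW l (Sum.inr q) p| = 1/4 * if inCell p q.cell then (2:ℝ) ^ ((q.1 : ℕ) + 1) else 0 := by
  have hscale : (2:ℝ) ^ ((((q.1 : ℕ) + 1 : ℕ) : ℤ) - 2) = 1/4 * 2 ^ ((q.1 : ℕ) + 1) := by
    rw [zpow_sub₀ two_ne_zero, zpow_natCast]; ring
  rw [mul_ite, mul_zero, ← hscale]
  by_cases hin : inCell p q.cell
  · rw [if_pos hin]
    simp only [inCell, WaveletIdx.cell] at hin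
    simp only [haarW, if_pos hin, abs_mul, abs_of_pos (zpow_pos (two_pos (α := ℝ)) _)]
    split_ifs <;> norm_num
  · rw [if_neg hin]
    simp only [inCell, WaveletIdx.cell] at hin
    simp only [haarW, if_neg hin, abs_zero]

theorem abs_haarW_mul_le_pyr {l : ℕ} {x : Pix l → ℝ} (hx : ∀ p, 0 ≤ x p) (q : WaveletIdx l) :
    |∑ p, haarW l (Sum.inr q) p * x p| ≤ 1/4 * |pyr x q.cell| := by
  rw [abs_of_nonneg (pyr_nonneg hx _), pyr_eq_sum]
  exact univ.abs_sum_mul_le_of_abs_le (fun p _ => hx p) fun p _ => (abs_haarW_inr q p).le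

theorem card_cell_fiber_le_three {l : ℕ} (c : Cell l) : #{q : WaveletIdx l | q.cell = c} ≤ 3 := by
  calc #{q : WaveletIdx l | q.cell = c} ≤ #(univ : Finset (Fin 3)) := by
        refine card_le_card_of_injOn (fun q => q.2.1) (fun _ _ => mem_univ _) ?_
        rintro ⟨i, t, a, b⟩ hq ⟨i', t', a', b'⟩ hq' (ht : t = t')
        simp only [mem_coe, mem_filter, mem_univ, true_and] at hq hq'
        have hcell := hq.trans hq'.symm
        simp only [WaveletIdx.cell, Sigma.mk.injEq, Fin.mk.injEq, Nat.add_right_cancel_iff] at hcell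
        obtain ⟨hi, hab⟩ := hcell
        obtain rfl : i = i' := Fin.ext hi
        obtain ⟨rfl, rfl⟩ := Prod.mk.inj (eq_of_heq hab)
        rw [ht]
    _ = 3 := by simp

theorem sum_abs_haarW_mulVec_outside_le {l : ℕ} {x : Pix l → ℝ} (hx : ∀ p, 0 ≤ x p)
    (S : Finset (Cell l)) :
    ∑ r ∈ univ.filter (fun r : RIdx l => ∃ c, cellOfRow r = some c ∧ c ∉ S),
        |(haarW l).mulVec x r|
      ≤ 3/4 * ∑ c ∈ univ.filter (fun c : Cell l => c ∉ S), |pyr x c| := by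
  set F : Cell l → ℝ := fun c => if c ∉ S then |pyr x c| else 0
  have hF : 0 ≤ F := fun c => by positivity
  calc ∑ r ∈ univ.filter (fun r : RIdx l => ∃ c, cellOfRow r = some c ∧ c ∉ S),
        |(haarW l).mulVec x r|
      = ∑ q : WaveletIdx l, if q.cell ∉ S then |(haarW l).mulVec x (Sum.inr q)| else 0 := by
        rw [sum_filter, Fintype.sum_sum_type]
        have hinl (u : Unit) : ¬∃ c, cellOfRow (Sum.inl u : RIdx l) = some c ∧ c ∉ S := by
          simp [cellOfRow]
        simp only [hinl, if_false, sum_const_zero, zero_add, cellOfRow_inr, Option.some.injEq,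
          exists_eq_left']
    _ ≤ ∑ q : WaveletIdx l, 1/4 * F q.cell := by
        refine sum_le_sum fun q _ => ?_
        simp only [F]
        split_ifs
        · simp
        · exact abs_haarW_mul_le_pyr hx q
    _ ≤ 1/4 * (3 * ∑ c, F c) := by
        rw [← mul_sum]
        gcongr
        exact_mod_cast sum_comp_le_mul_sum WaveletIdx.cell hF card_cell_fiber_le_three
    _ = 3/4 * ∑ c ∈ univ.filter (fun c : Cell l => c ∉ S), |pyr x c| := by
        rw [sum_filter]; ring

/-- For nonnegative `x`, each wavelet coefficient of a cell is at most `1/4`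
of the corresponding pyramid coefficient; consequently, if the ℓ₁ mass of
`Px` outside a set of cells `S` is at most `ε·E`, where
`E = min_{k-sparse x'} ‖x - x'‖_EMD`, then the ℓ₁ mass of `Wx` outside the
induced support `S'` (the constant coefficient plus the three wavelet
coefficients of each cell of `S`) is at most `(3/4)·ε·E`. -/
theorem stmt15 {l : ℕ} (k : ℕ) (x : Pix l → ℝ) (hx : ∀ p, 0 ≤ x p) :
    (∀ q : Σ i : Fin l, Fin 3 × Fin (2^(l-((i:ℕ)+1))) × Fin (2^(l-((i:ℕ)+1))),
      |∑ p : Pix l, haarW l (Sum.inr q) p * x p|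
        ≤ (1/4) * |pyr x ⟨⟨(q.1 : ℕ) + 1, Nat.succ_lt_succ q.1.2⟩, (q.2.2.1, q.2.2.2)⟩|) ∧
    (∀ (S : Finset (Cell l)) (ε : ℝ), 0 ≤ ε →
      (∑ c ∈ Finset.univ.filter (fun c : Cell l => c ∉ S), |pyr x c|
          ≤ ε * sInf {e | ∃ x' : Pix l → ℝ, sparsity x' ≤ k ∧ e = emdNorm (x - x')}) →
      ∑ r ∈ Finset.univ.filter (fun r : RIdx l => ∃ c, cellOfRow r = some c ∧ c ∉ S),
          |(haarW l).mulVec x r|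
        ≤ (3/4) * ε * sInf {e | ∃ x' : Pix l → ℝ, sparsity x' ≤ k ∧ e = emdNorm (x - x')}) := by
  refine ⟨abs_haarW_mul_le_pyr hx, fun S ε _ hP => ?_⟩
  calc _ ≤ 3/4 * ∑ c ∈ univ.filter (fun c : Cell l => c ∉ S), |pyr x c| :=
        sum_abs_haarW_mulVec_outside_le hx S
    _ ≤ 3/4 * (ε * sInf {e | ∃ x' : Pix l → ℝ, sparsity x' ≤ k ∧ e = emdNorm (x - x')}) := by
        gcongr
    _ = _ := by ring
end
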